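/- Let N ≥ 2 be an integer, 0 < δ < R, and let f satisfy (A1), (A3) and (A4). For each n ∈ ℕ, let u_n be a solution of problem (P)_{δ,1} (parameter λ = 1) having exactly n−1 zeros in (δ,R), all simple. Then lim_{n→∞} sup_{r∈[δ,R]} |u_n(r)| = 0 and lim_{n→∞} sup_{r∈[δ,R]} |u_n'(r)| = 0. -/

import Mathlib

/-!
Along a solution of `(P)_{δ,1}` consider the energy
`E(r) = (√(1 + φ₁(u')²) - 1) + F(r, u)`, the sum of the relativistic kinetic energy
`1/√(1 - u'²) - 1` and the potential `F(r, u) ≥ 0`. Differentiating with the equation gives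
`E' = ∂F/∂r(r, u) - (N - 1)/r · u' φ₁(u')`, and since `u' φ₁(u')` is at most twice the kinetic
energy, (A4) yields `|E'| ≤ K E` with `K` independent of the solution. By Gronwall,
`E ≤ E(τ) e^{K(R - δ)}` for every `τ ∈ [δ,R]`.

If `u` has `n - 1` zeros in `(δ,R)`, then together with `R` these are `n` zeros in `(δ,R]`, two
of which are closer than `(R - δ)/(n - 1)`. Between them lies a critical point `τ`, where the
kinetic energy vanishes and `|u(τ)| < (R - δ)/(n - 1)` because `|u'| < 1`; so
`E(τ) = F(τ, u(τ)) = O(1/n)`. As the kinetic energy dominates `u'²/2`, `u_n' → 0` uniformly,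
and then `u_n → 0` uniformly because `u_n(R) = 0`.
-/

open Set Filter Topology

/-- `φ₁(s) = s / √(1 - s²)`. -/
noncomputable def phi1 (s : ℝ) : ℝ := s / Real.sqrt (1 - s ^ 2)

/-- Condition (A1): `f : [0,R] × (-α,α) → ℝ` is continuous, `R < α ≤ ∞`, and
`f(r,s) s > 0` for `r ∈ [0,R]` and `0 < |s| < α`. -/
def CondA1 (R : ℝ) (α : EReal) (f : ℝ → ℝ → ℝ) : Prop :=
  (R : EReal) < α ∧
  ContinuousOn (fun p : ℝ × ℝ => f p.1 p.2)
    {p : ℝ × ℝ | p.1 ∈ Icc 0 R ∧ ((|p.2| : ℝ) : EReal) < α} ∧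
  ∀ r ∈ Icc 0 R, ∀ s : ℝ, ((|s| : ℝ) : EReal) < α → s ≠ 0 → 0 < f r s * s

/-- Condition (A2): `f(r,s)/s → m(r)` as `s → 0`, uniformly in `r ∈ [δ,R]`, with
`m` continuous, nonnegative, and not identically zero on any nondegenerate
subinterval of `[δ,R]`. -/
def CondA2 (δ R : ℝ) (f : ℝ → ℝ → ℝ) (m : ℝ → ℝ) : Prop :=
  ContinuousOn m (Icc δ R) ∧
  (∀ r ∈ Icc δ R, 0 ≤ m r) ∧
  (∀ a b : ℝ, δ ≤ a → a < b → b ≤ R → ∃ r ∈ Icc a b, m r ≠ 0) ∧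
  ∀ ε : ℝ, 0 < ε → ∃ η : ℝ, 0 < η ∧
    ∀ r ∈ Icc δ R, ∀ s : ℝ, s ≠ 0 → |s| < η → |f r s / s - m r| < ε

/-- Condition (A3): `f(r,0) = 0` and `f(r,s)/φ₁(s) → ∞` as `s → 0`, uniformly in
`r ∈ [δ,R]`. -/
def CondA3 (δ R : ℝ) (f : ℝ → ℝ → ℝ) : Prop :=
  (∀ r ∈ Icc δ R, f r 0 = 0) ∧
  ∀ M : ℝ, ∃ η : ℝ, 0 < η ∧
    ∀ r ∈ Icc δ R, ∀ s : ℝ, s ≠ 0 → |s| < η → M < f r s / phi1 s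

/-- Condition (A4): `F(r,s) = ∫₀^s f(r,x) dx` is differentiable in `r ∈ [δ,R]` and
`|∂F/∂r(r,s)| ≤ ω(r) F(r,s)` for a continuous nonnegative `ω`. -/
def CondA4 (δ R : ℝ) (α : EReal) (f : ℝ → ℝ → ℝ) : Prop :=
  ∃ Fr : ℝ → ℝ → ℝ, ∃ ω : ℝ → ℝ,
    ContinuousOn ω (Icc δ R) ∧ (∀ r ∈ Icc δ R, 0 ≤ ω r) ∧
    ∀ s : ℝ, ((|s| : ℝ) : EReal) < α →
      (∀ r ∈ Icc δ R,
        HasDerivWithinAt (fun t => ∫ x in (0:ℝ)..s, f t x) (Fr r s) (Icc δ R) r) ∧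
      (∀ r ∈ Icc δ R, |Fr r s| ≤ ω r * ∫ x in (0:ℝ)..s, f r x)

/-- `u` (with derivative `u'`) is a solution of problem `(P)_{δ,λ}`:
`u ∈ C¹([δ,R])`, `|u'| < 1`, `r ↦ r^{N-1} φ₁(u'(r))` is continuously
differentiable, `(r^{N-1} φ₁(u'))' + λ r^{N-1} f(r,u) = 0` on `(δ,R)`, and
`u'(δ) = 0 = u(R)`. -/
def IsSolP (N : ℕ) (δ R lam : ℝ) (f : ℝ → ℝ → ℝ) (u u' : ℝ → ℝ) : Prop :=
  (∀ r ∈ Icc δ R, HasDerivWithinAt u (u' r) (Icc δ R) r) ∧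
  ContinuousOn u' (Icc δ R) ∧
  (∀ r ∈ Icc δ R, |u' r| < 1) ∧
  (∃ w' : ℝ → ℝ, ContinuousOn w' (Icc δ R) ∧
    (∀ r ∈ Icc δ R,
      HasDerivWithinAt (fun t => t ^ (N - 1) * phi1 (u' t)) (w' r) (Icc δ R) r) ∧
    ∀ r ∈ Ioo δ R, w' r + lam * r ^ (N - 1) * f r (u r) = 0) ∧
  u' δ = 0 ∧ u R = 0

/-- `u ∈ S^ν_{k,δ}`: `u'(δ) = u(R) = 0`, `u` has exactly `k-1` zeros in `(δ,R)`,
all simple (`u' ≠ 0` there), and `ν u > 0` on some interval `(δ, δ+σ)`. -/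
def InS (δ R : ℝ) (k : ℕ) (ν : ℝ) (u u' : ℝ → ℝ) : Prop :=
  u' δ = 0 ∧ u R = 0 ∧
  (∃ Z : Finset ℝ, Z.card = k - 1 ∧
    (∀ r : ℝ, r ∈ Z ↔ r ∈ Ioo δ R ∧ u r = 0) ∧
    ∀ r ∈ Z, u' r ≠ 0) ∧
  ∃ σ : ℝ, 0 < σ ∧ ∀ r ∈ Ioo δ (δ + σ), 0 < ν * u r

/-- `w` (with derivative `w'`) is a solution of the linear problem
`-(r^{N-1} w')' = λ r^{N-1} m(r) w` on `(δ,R)` with `w'(δ) = w(R) = 0`. -/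
def IsLinSol (N : ℕ) (δ R lam : ℝ) (m : ℝ → ℝ) (w w' : ℝ → ℝ) : Prop :=
  (∀ r ∈ Icc δ R, HasDerivWithinAt w (w' r) (Icc δ R) r) ∧
  ContinuousOn w' (Icc δ R) ∧
  (∃ g : ℝ → ℝ, ContinuousOn g (Icc δ R) ∧
    (∀ r ∈ Icc δ R,
      HasDerivWithinAt (fun t => t ^ (N - 1) * w' t) (g r) (Icc δ R) r) ∧
    ∀ r ∈ Ioo δ R, -g r = lam * r ^ (N - 1) * m r * w r) ∧
  w' δ = 0 ∧ w R = 0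

/-- `lam` is the `k`-th eigenvalue of the linear problem: it is positive and the
problem admits a nontrivial solution having exactly `k-1` simple zeros in
`(δ,R)`. -/
def IsKthEigen (N : ℕ) (δ R : ℝ) (m : ℝ → ℝ) (k : ℕ) (lam : ℝ) : Prop :=
  0 < lam ∧
  ∃ w w' : ℝ → ℝ, IsLinSol N δ R lam m w w' ∧ (∃ r ∈ Icc δ R, w r ≠ 0) ∧
    ∃ Z : Finset ℝ, Z.card = k - 1 ∧
      (∀ r : ℝ, r ∈ Z ↔ r ∈ Ioo δ R ∧ w r = 0) ∧
      ∀ r ∈ Z, w' r ≠ 0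

/-- The function `h(y) = (1-y²)^{3/2}` for `|y| ≤ 1`, `h(y) = 0` otherwise. -/
noncomputable def hcap (y : ℝ) : ℝ := if |y| ≤ 1 then (1 - y ^ 2) ^ ((3 : ℝ) / 2) else 0

/-- `φ₁⁻¹(y) = y / √(1 + y²)`, the inverse of `φ₁`. -/
noncomputable def phi1inv (y : ℝ) : ℝ := y / Real.sqrt (1 + y ^ 2)

/-- `Σ_δ`: the closure, in `ℝ × C¹([δ,R])` (realized as `ℝ × (C([δ,R]) × C([δ,R]))`
via `u ↦ (u, u')`), of the set of pairs `(λ, u)` with `λ ≥ 0` and `u` a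
nontrivial solution of `(P)_{δ,λ}`. -/
noncomputable def SigmaSet (N : ℕ) (δ R : ℝ) (f : ℝ → ℝ → ℝ) :
    Set (ℝ × (ContinuousMap (Icc δ R) ℝ × ContinuousMap (Icc δ R) ℝ)) :=
  closure {p | 0 ≤ p.1 ∧ ∃ u u' : ℝ → ℝ,
    IsSolP N δ R p.1 f u u' ∧
    (∀ x : Icc δ R, p.2.1 x = u x ∧ p.2.2 x = u' x) ∧
    ∃ r ∈ Icc δ R, u r ≠ 0}

open Real MeasureTheory

lemma phi1inv_phi1 {y : ℝ} (hy : |y| < 1) : phi1inv (phi1 y) = y := by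
  have hy2 : 0 < 1 - y ^ 2 := by nlinarith [sq_abs y, abs_nonneg y]
  have hs := sqrt_pos.2 hy2
  have h : 1 + phi1 y ^ 2 = (√(1 - y ^ 2))⁻¹ ^ 2 := by
    rw [phi1, div_pow, inv_pow, sq_sqrt hy2.le]
    field_simp
    ring
  rw [phi1inv, h, sqrt_sq (by positivity), phi1]
  field_simp

lemma hasDerivAt_sqrt_one_add_sq (q : ℝ) :
    HasDerivAt (fun q => √(1 + q ^ 2)) (phi1inv q) q := by
  have hpos : 0 < 1 + q ^ 2 := by positivity
  convert ((hasDerivAt_pow 2 q).const_add 1).sqrt hpos.ne' using 1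
  rw [phi1inv]
  field_simp
  ring

-- Written in the momentum `q = φ₁(y)`, for which `y = phi1inv q`; in the velocity `y` it is
-- the relativistic kinetic energy `1 / √(1 - y²) - 1`.
noncomputable def kineticEnergy (q : ℝ) : ℝ := √(1 + q ^ 2) - 1

lemma one_le_sqrt_one_add_sq (q : ℝ) : 1 ≤ √(1 + q ^ 2) :=
  one_le_sqrt.2 (by nlinarith [sq_nonneg q])

lemma kineticEnergy_nonneg (q : ℝ) : 0 ≤ kineticEnergy q :=
  sub_nonneg.2 (one_le_sqrt_one_add_sq q)

lemma phi1inv_mul_self_nonneg (q : ℝ) : 0 ≤ phi1inv q * q := by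
  rw [phi1inv, div_mul_eq_mul_div, ← sq]
  positivity

lemma phi1inv_mul_self_le (q : ℝ) : phi1inv q * q ≤ 2 * kineticEnergy q := by
  have hS := one_le_sqrt_one_add_sq q
  have hS2 : √(1 + q ^ 2) ^ 2 = 1 + q ^ 2 := sq_sqrt (by positivity)
  rw [phi1inv, kineticEnergy, div_mul_eq_mul_div, div_le_iff₀ (by linarith)]
  nlinarith

lemma sq_phi1inv_le (q : ℝ) : phi1inv q ^ 2 ≤ 2 * kineticEnergy q := by
  have hS := one_le_sqrt_one_add_sq q
  have hS2 : √(1 + q ^ 2) ^ 2 = 1 + q ^ 2 := sq_sqrt (by positivity)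
  rw [phi1inv, kineticEnergy, div_pow, hS2, div_le_iff₀ (by positivity)]
  nlinarith [sq_nonneg q, mul_nonneg (sq_nonneg q) (sub_nonneg.2 hS)]

lemma le_mul_exp_of_deriv_le {E E' : ℝ → ℝ} {a b K : ℝ} (hc : ContinuousOn E (Icc a b))
    (hd : ∀ x ∈ Ioo a b, HasDerivAt E (E' x) x) (hb : ∀ x ∈ Ioo a b, E' x ≤ K * E x) :
    ∀ x ∈ Icc a b, E x ≤ E a * exp (K * (x - a)) := by
  have hanti : AntitoneOn (fun x => E x * exp (-K * x)) (Icc a b) := by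
    refine antitoneOn_of_hasDerivWithinAt_nonpos (convex_Icc a b)
      (hc.mul (by fun_prop)) (fun x hx => ?_) (fun x hx => ?_)
      (f' := fun x => E' x * exp (-K * x) + E x * (-K * exp (-K * x)))
    · rw [interior_Icc] at hx
      exact ((hd x hx).mul ((hasDerivAt_id x).const_mul (-K)).exp |>.congr_deriv
        (by simp [mul_comm])).hasDerivWithinAt
    · rw [interior_Icc] at hx
      nlinarith [hb x hx, exp_pos (-K * x)]
  intro x hx
  have h := hanti ⟨le_rfl, hx.1.trans hx.2⟩ hx hx.1
  have : exp (K * (x - a)) = exp (-K * a) / exp (-K * x) := by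
    rw [← exp_sub]; ring_nf
  rw [this, mul_div_assoc', le_div_iff₀ (exp_pos _)]
  simpa using h

lemma le_mul_exp_abs_sub_of_abs_deriv_le {E E' : ℝ → ℝ} {a b K τ : ℝ}
    (hc : ContinuousOn E (Icc a b)) (hd : ∀ x ∈ Ioo a b, HasDerivAt E (E' x) x)
    (hb : ∀ x ∈ Ioo a b, |E' x| ≤ K * E x) (hτ : τ ∈ Icc a b) :
    ∀ x ∈ Icc a b, E x ≤ E τ * exp (K * |x - τ|) := by
  intro x hx
  rcases le_total τ x with hτx | hxτ
  · have := le_mul_exp_of_deriv_le (hc.mono (Icc_subset_Icc_left hτ.1))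
      (fun y hy => hd y ⟨hτ.1.trans_lt hy.1, hy.2⟩)
      (fun y hy => (le_abs_self _).trans (hb y ⟨hτ.1.trans_lt hy.1, hy.2⟩)) x ⟨hτx, hx.2⟩
    rwa [abs_of_nonneg (sub_nonneg.2 hτx)]
  · have hneg : ∀ y ∈ Ioo (-τ) (-a), -y ∈ Ioo a b := fun y hy =>
      ⟨by linarith [hy.2], by linarith [hy.1, hτ.2]⟩
    have := le_mul_exp_of_deriv_le (E := fun y => E (-y)) (E' := fun y => -E' (-y))
      ((hc.mono (Icc_subset_Icc_right hτ.2)).comp continuousOn_neg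
        (fun y hy => ⟨by linarith [hy.2], by linarith [hy.1]⟩))
      (fun y hy => ((hd (-y) (hneg y hy)).comp y (hasDerivAt_neg' y)).congr_deriv (by ring))
      (fun y hy => (neg_le_abs _).trans (hb (-y) (hneg y hy))) (-x)
      ⟨by linarith, by linarith [hx.1]⟩
    rw [abs_of_nonpos (sub_nonpos.2 hxτ)]
    simpa [neg_neg, add_comm, sub_eq_add_neg] using this

lemma Finset.exists_lt_sub_lt_of_subset_Ioc {S : Finset ℝ} {a b : ℝ} {m : ℕ} (hm : 0 < m)
    (hS : ∀ z ∈ S, z ∈ Set.Ioc a b) (hcard : m < S.card) :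
    ∃ z ∈ S, ∃ z' ∈ S, z < z' ∧ z' - z < (b - a) / m := by
  obtain ⟨z₀, hz₀⟩ := Finset.card_pos.1 (hm.trans hcard)
  have hab := (hS z₀ hz₀).1.trans_le (hS z₀ hz₀).2
  have hL : 0 < (b - a) / m := div_pos (by linarith) (by positivity)
  have hmaps : MapsTo (fun z => ⌊(b - z) / ((b - a) / m)⌋) S (Finset.Ico (0 : ℤ) m) := by
    intro z hz
    have ⟨h₁, h₂⟩ := hS z hz
    simp only [Finset.coe_Ico, Set.mem_Ico, Int.floor_nonneg, Int.floor_lt]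
    refine ⟨div_nonneg (by linarith) hL.le, ?_⟩
    rw [div_lt_iff₀ hL, Int.cast_natCast, mul_div_cancel₀ _ (by positivity)]
    linarith
  obtain ⟨z, hz, z', hz', hne, heq⟩ := Finset.exists_ne_map_eq_of_card_lt_of_maps_to
    (by simpa using hcard) hmaps
  have hgap := Int.abs_sub_lt_one_of_floor_eq_floor heq
  rw [← sub_div, abs_div, abs_of_pos hL, div_lt_one hL, sub_sub_sub_cancel_left] at hgap
  rcases hne.lt_or_gt with h | h
  · exact ⟨z, hz, z', hz', h, (le_abs_self _).trans_lt hgap⟩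
  · exact ⟨z', hz', z, hz, h, (le_abs_self _).trans_lt (by rwa [abs_sub_comm])⟩

open intervalIntegral in
lemma isLittleO_integral_sub_self {g : ℝ → ℝ → ℝ} {u : ℝ → ℝ} {s : Set ℝ} {r : ℝ}
    (hg : ContinuousWithinAt (Function.uncurry g) (s ×ˢ univ) (r, u r))
    (hu : ContinuousWithinAt u s r) :
    (fun t => ∫ x in u r..u t, (g t x - g r (u r))) =o[𝓝[s] r] fun t => u t - u r := by
  refine Asymptotics.isLittleO_iff.2 fun C hC => ?_
  rw [ContinuousWithinAt, nhdsWithin_prod_eq, nhdsWithin_univ] at hg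
  obtain ⟨P, hP, Q, hQ, hPQ⟩ := mem_prod_iff.1 (hg (Metric.closedBall_mem_nhds _ hC))
  obtain ⟨η, hη, hball⟩ := Metric.mem_nhds_iff.1 hQ
  filter_upwards [hP, hu (Metric.ball_mem_nhds _ hη)] with t hPt hut
  refine norm_integral_le_of_norm_le_const fun x hx => ?_
  have hx : x ∈ Metric.ball (u r) η := by
    rw [mem_preimage, Metric.mem_ball, Real.dist_eq] at hut
    rw [Metric.mem_ball, Real.dist_eq]
    exact (abs_sub_left_of_mem_uIcc (uIoc_subset_uIcc hx)).trans_lt hut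
  simpa [← Real.dist_eq] using hPQ (mk_mem_prod hPt (hball hx))

open intervalIntegral in
lemma HasDerivWithinAt.integral_comp {g : ℝ → ℝ → ℝ} {u : ℝ → ℝ} {s : Set ℝ} {r a u' A : ℝ}
    (hA : HasDerivWithinAt (fun t => ∫ x in a..u r, g t x) A s r)
    (hu : HasDerivWithinAt u u' s r)
    (hg : ContinuousWithinAt (Function.uncurry g) (s ×ˢ univ) (r, u r))
    (hint : ∀ᶠ t in 𝓝[s] r, IntervalIntegrable (g t) volume a (u r) ∧
      IntervalIntegrable (g t) volume (u r) (u t)) :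
    HasDerivWithinAt (fun t => ∫ x in a..u t, g t x) (A + g r (u r) * u') s r := by
  have hrest : HasDerivWithinAt (fun t => ∫ x in u r..u t, g t x) (g r (u r) * u') s r := by
    rw [hasDerivWithinAt_iff_isLittleO]
    have hlin := (hasDerivWithinAt_iff_isLittleO.1 hu).const_mul_left (g r (u r))
    refine ((isLittleO_integral_sub_self hg hu.continuousWithinAt).trans_isBigO
      hu.hasFDerivWithinAt.isBigO_sub).add hlin |>.congr' ?_ (.refl _ _)
    filter_upwards [hint] with t ht
    rw [integral_sub ht.2 intervalIntegrable_const, intervalIntegral.integral_const,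
      integral_same, smul_eq_mul, smul_eq_mul]
    ring
  refine (hA.add hrest).congr_of_eventuallyEq ?_ (by simp)
  filter_upwards [hint] with t ht
  simp only [Pi.add_apply]
  exact (integral_add_adjacent_intervals ht.1 ht.2).symm

open intervalIntegral in
lemma integral_nonneg_of_mul_pos {g : ℝ → ℝ} {s : ℝ} (hg : IntervalIntegrable g volume 0 s)
    (hsign : ∀ x ∈ uIcc 0 s, x ≠ 0 → 0 < g x * x) : 0 ≤ ∫ x in 0..s, g x := by
  rcases lt_trichotomy s 0 with hs | rfl | hs
  · have hpos : 0 < ∫ x in s..0, -g x := by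
      refine intervalIntegral_pos_of_pos_on hg.symm.neg (fun x hx => ?_) hs
      have := hsign x (by rw [uIcc_of_ge hs.le]; exact Ioo_subset_Icc_self hx) hx.2.ne
      nlinarith [hx.2]
    rw [intervalIntegral.integral_neg] at hpos
    rw [intervalIntegral.integral_symm]
    exact hpos.le
  · simp
  · refine (intervalIntegral_pos_of_pos_on hg (fun x hx => ?_) hs).le
    have := hsign x (by rw [uIcc_of_le hs.le]; exact Ioo_subset_Icc_self hx) hx.1.ne'
    exact pos_of_mul_pos_left this hx.1.le

noncomputable def energy (f : ℝ → ℝ → ℝ) (u v : ℝ → ℝ) (r : ℝ) : ℝ :=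
  kineticEnergy (phi1 (v r)) + ∫ x in (0 : ℝ)..u r, f r x

namespace IsSolP

variable {N : ℕ} {δ R lam : ℝ} {f Fr : ℝ → ℝ → ℝ} {u v : ℝ → ℝ}

lemma abs_sub_le_mul (h : IsSolP N δ R lam f u v) {M : ℝ} (hM : ∀ x ∈ Icc δ R, |v x| ≤ M)
    {s t : ℝ} (hs : s ∈ Icc δ R) (ht : t ∈ Icc δ R) : |u s - u t| ≤ M * |s - t| :=
  Convex.norm_image_sub_le_of_norm_hasDerivWithin_le h.1 hM (convex_Icc δ R) ht hs

lemma abs_le_mul (h : IsSolP N δ R lam f u v) {M : ℝ} (hM : ∀ x ∈ Icc δ R, |v x| ≤ M)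
    {t : ℝ} (ht : t ∈ Icc δ R) : |u t| ≤ M * (R - δ) := by
  have hR : R ∈ Icc δ R := ⟨ht.1.trans ht.2, le_rfl⟩
  have hM0 : 0 ≤ M := (abs_nonneg _).trans (hM t ht)
  calc |u t| = |u t - u R| := by rw [h.2.2.2.2.2, sub_zero]
    _ ≤ M * |t - R| := h.abs_sub_le_mul hM ht hR
    _ ≤ M * (R - δ) := by
      gcongr
      rw [abs_sub_comm, abs_of_nonneg (by linarith [ht.2])]
      linarith [ht.1]

lemma abs_le (h : IsSolP N δ R lam f u v) {t : ℝ} (ht : t ∈ Icc δ R) : |u t| ≤ R - δ := by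
  simpa using h.abs_le_mul (fun x hx => (h.2.2.1 x hx).le) ht

lemma hasDerivAt_phi1 (h : IsSolP N δ R lam f u v) (hδ : 0 < δ) {r : ℝ} (hr : r ∈ Ioo δ R) :
    HasDerivAt (fun t => phi1 (v t))
      (-(lam * f r (u r)) - (N - 1 : ℕ) * phi1 (v r) / r) r := by
  obtain ⟨w', -, hw', hode⟩ := h.2.2.2.1
  have hr0 : 0 < r := hδ.trans hr.1
  have hw := (hw' r (Ioo_subset_Icc_self hr)).hasDerivAt (Icc_mem_nhds hr.1 hr.2)
  have hpow : (N - 1 : ℕ) * r ^ (N - 1 - 1) * r = (N - 1 : ℕ) * r ^ (N - 1) := by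
    rcases Nat.eq_zero_or_pos (N - 1) with hk | hk
    · simp [hk]
    · rw [mul_assoc, ← pow_succ, Nat.sub_add_cancel hk]
  refine (hw.div (hasDerivAt_pow (N - 1) r) (pow_pos hr0 _).ne').congr_of_eventuallyEq ?_
    |>.congr_deriv ?_
  · filter_upwards [lt_mem_nhds hr0] with t ht
    simp only [Pi.div_apply]
    field_simp [ht.ne']
  · rw [eq_sub_of_add_eq (hode r hr)]
    generalize r ^ (N - 1 - 1) = p at hpow ⊢
    have hX : 0 < r ^ (N - 1) := pow_pos hr0 _
    generalize r ^ (N - 1) = X at hpow hX ⊢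
    field_simp
    linear_combination -phi1 (v r) * hpow

lemma exists_deriv_eq_zero_abs_le (h : IsSolP N δ R lam f u v) (hδR : δ < R) {n : ℕ}
    (hn : 2 ≤ n)
    {Z : Finset ℝ} (hZcard : Z.card = n - 1) (hZ : ∀ r : ℝ, r ∈ Z ↔ r ∈ Ioo δ R ∧ u r = 0) :
    ∃ τ ∈ Icc δ R, v τ = 0 ∧ |u τ| ≤ (R - δ) / (n - 1 : ℕ) := by
  have hRZ : R ∉ Z := fun hR => ((hZ R).1 hR).1.2.false
  have hS : ∀ z ∈ insert R Z, z ∈ Ioc δ R ∧ u z = 0 := by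
    intro z hz
    rcases Finset.mem_insert.1 hz with rfl | hz
    · exact ⟨⟨hδR, le_rfl⟩, h.2.2.2.2.2⟩
    · obtain ⟨hz, hu⟩ := (hZ z).1 hz
      exact ⟨Ioo_subset_Ioc_self hz, hu⟩
  obtain ⟨z, hz, z', hz', hzz', hgap⟩ := Finset.exists_lt_sub_lt_of_subset_Ioc (m := n - 1)
    (by omega) (fun z hz => (hS z hz).1)
    (by rw [Finset.card_insert_of_notMem hRZ, hZcard]; omega)
  have hsub : Icc z z' ⊆ Icc δ R := Icc_subset_Icc (hS z hz).1.1.le (hS z' hz').1.2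
  obtain ⟨τ, hτ, hvτ⟩ := exists_hasDerivAt_eq_zero hzz'
    (fun x hx => (h.1 x (hsub hx)).continuousWithinAt.mono hsub)
    ((hS z hz).2.trans (hS z' hz').2.symm)
    (fun x hx => (h.1 x (hsub (Ioo_subset_Icc_self hx))).hasDerivAt
      (Icc_mem_nhds ((hS z hz).1.1.trans hx.1) (hx.2.trans_le (hS z' hz').1.2)))
  have hτ' := hsub (Ioo_subset_Icc_self hτ)
  refine ⟨τ, hτ', hvτ, ?_⟩
  calc |u τ| = |u τ - u z| := by rw [(hS z hz).2, sub_zero]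
    _ ≤ 1 * |τ - z| :=
      h.abs_sub_le_mul (fun x hx => (h.2.2.1 x hx).le) hτ' (hsub ⟨le_rfl, hzz'.le⟩)
    _ ≤ (R - δ) / (n - 1 : ℕ) := by
      rw [one_mul, abs_of_pos (sub_pos.2 hτ.1)]
      linarith [hτ.2]

lemma mem_Ioo (h : IsSolP N δ R lam f u v) (hδ : 0 < δ) {t : ℝ} (ht : t ∈ Icc δ R) :
    u t ∈ Ioo (-R) R :=
  abs_lt.1 ((h.abs_le ht).trans_lt (by linarith))

lemma hasDerivWithinAt_potential (h : IsSolP N δ R lam f u v) (hδ : 0 < δ)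
    (hf : ContinuousOn (Function.uncurry f) (Icc δ R ×ˢ Icc (-R) R))
    (hFr : ∀ r ∈ Icc δ R, ∀ s ∈ Icc (-R) R,
      HasDerivWithinAt (fun t => ∫ x in (0 : ℝ)..s, f t x) (Fr r s) (Icc δ R) r)
    {r : ℝ} (hr : r ∈ Icc δ R) :
    HasDerivWithinAt (fun t => ∫ x in (0 : ℝ)..u t, f t x) (Fr r (u r) + f r (u r) * v r)
      (Icc δ R) r := by
  have hu := h.mem_Ioo hδ hr
  have h0 : (0 : ℝ) ∈ Icc (-R) R := ⟨by linarith [hr.1.trans hr.2], by linarith [hr.1.trans hr.2]⟩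
  have hint : ∀ t ∈ Icc δ R, ∀ a ∈ Icc (-R) R, ∀ b ∈ Icc (-R) R,
      IntervalIntegrable (f t) volume a b := fun t ht a ha b hb =>
    ((hf.comp (continuousOn_const.prodMk continuousOn_id) fun x hx => ⟨ht, hx⟩).mono
      (uIcc_subset_Icc ha hb)).intervalIntegrable
  refine (hFr r hr (u r) (Ioo_subset_Icc_self hu)).integral_comp (h.1 r hr) ?_ ?_
  · refine (hf _ ⟨hr, Ioo_subset_Icc_self hu⟩).mono_of_mem_nhdsWithin ?_
    rw [nhdsWithin_prod_eq, nhdsWithin_univ]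
    exact prod_mem_prod self_mem_nhdsWithin (Icc_mem_nhds hu.1 hu.2)
  · filter_upwards [self_mem_nhdsWithin] with t ht
    exact ⟨hint t ht _ h0 _ (Ioo_subset_Icc_self hu),
      hint t ht _ (Ioo_subset_Icc_self hu) _ (Ioo_subset_Icc_self (h.mem_Ioo hδ ht))⟩

lemma continuousOn_energy (h : IsSolP N δ R lam f u v) (hδ : 0 < δ)
    (hf : ContinuousOn (Function.uncurry f) (Icc δ R ×ˢ Icc (-R) R))
    (hFr : ∀ r ∈ Icc δ R, ∀ s ∈ Icc (-R) R,
      HasDerivWithinAt (fun t => ∫ x in (0 : ℝ)..s, f t x) (Fr r s) (Icc δ R) r) :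
    ContinuousOn (energy f u v) (Icc δ R) := by
  have hsqrt : ContinuousOn (fun t => √(1 - v t ^ 2)) (Icc δ R) :=
    (continuousOn_const.sub (h.2.1.pow 2)).sqrt
  have hphi : ContinuousOn (fun t => phi1 (v t)) (Icc δ R) := h.2.1.div hsqrt fun t ht =>
    (sqrt_pos.2 (by nlinarith [sq_abs (v t), h.2.2.1 t ht, abs_nonneg (v t)])).ne'
  have hkin : Continuous kineticEnergy := by unfold kineticEnergy; fun_prop
  exact (hkin.comp_continuousOn hphi).add fun r hr =>
    (h.hasDerivWithinAt_potential hδ hf hFr hr).continuousWithinAt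

lemma hasDerivAt_energy (h : IsSolP N δ R 1 f u v) (hδ : 0 < δ)
    (hf : ContinuousOn (Function.uncurry f) (Icc δ R ×ˢ Icc (-R) R))
    (hFr : ∀ r ∈ Icc δ R, ∀ s ∈ Icc (-R) R,
      HasDerivWithinAt (fun t => ∫ x in (0 : ℝ)..s, f t x) (Fr r s) (Icc δ R) r)
    {r : ℝ} (hr : r ∈ Ioo δ R) :
    HasDerivAt (energy f u v) (Fr r (u r) - (N - 1 : ℕ) / r * (v r * phi1 (v r))) r := by
  have hkin := ((hasDerivAt_sqrt_one_add_sq _).comp r (h.hasDerivAt_phi1 hδ hr)).sub_const 1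
  have hpot := (h.hasDerivWithinAt_potential hδ hf hFr (Ioo_subset_Icc_self hr)).hasDerivAt
    (Icc_mem_nhds hr.1 hr.2)
  refine (hkin.add hpot).congr_deriv ?_
  rw [phi1inv_phi1 (h.2.2.1 r (Ioo_subset_Icc_self hr))]
  ring

lemma energy_nonneg (h : IsSolP N δ R lam f u v) (hδ : 0 < δ)
    (hF : ∀ r ∈ Icc δ R, ∀ s ∈ Icc (-R) R, 0 ≤ ∫ x in (0 : ℝ)..s, f r x)
    {r : ℝ} (hr : r ∈ Icc δ R) : 0 ≤ energy f u v r :=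
  add_nonneg (kineticEnergy_nonneg _) (hF r hr _ (Ioo_subset_Icc_self (h.mem_Ioo hδ hr)))

lemma sq_le_two_mul_energy (h : IsSolP N δ R lam f u v) (hδ : 0 < δ)
    (hF : ∀ r ∈ Icc δ R, ∀ s ∈ Icc (-R) R, 0 ≤ ∫ x in (0 : ℝ)..s, f r x)
    {r : ℝ} (hr : r ∈ Icc δ R) : v r ^ 2 ≤ 2 * energy f u v r := by
  have := sq_phi1inv_le (phi1 (v r))
  rw [phi1inv_phi1 (h.2.2.1 r hr)] at this
  have hpot := hF r hr _ (Ioo_subset_Icc_self (h.mem_Ioo hδ hr))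
  rw [energy]
  linarith

lemma abs_deriv_energy_le (h : IsSolP N δ R lam f u v) (hδ : 0 < δ)
    (hF : ∀ r ∈ Icc δ R, ∀ s ∈ Icc (-R) R, 0 ≤ ∫ x in (0 : ℝ)..s, f r x) {W : ℝ} (hW : 0 ≤ W)
    (hFr : ∀ r ∈ Icc δ R, ∀ s ∈ Icc (-R) R, |Fr r s| ≤ W * ∫ x in (0 : ℝ)..s, f r x)
    {r : ℝ} (hr : r ∈ Icc δ R) :
    |Fr r (u r) - (N - 1 : ℕ) / r * (v r * phi1 (v r))| ≤
      (W + 2 * (N - 1 : ℕ) / δ) * energy f u v r := by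
  have hu := Ioo_subset_Icc_self (h.mem_Ioo hδ hr)
  have hpot := hF r hr _ hu
  have hkin := kineticEnergy_nonneg (phi1 (v r))
  have hvphi : 0 ≤ v r * phi1 (v r) ∧ v r * phi1 (v r) ≤ 2 * kineticEnergy (phi1 (v r)) := by
    have h₁ := phi1inv_mul_self_nonneg (phi1 (v r))
    have h₂ := phi1inv_mul_self_le (phi1 (v r))
    rw [phi1inv_phi1 (h.2.2.1 r hr)] at h₁ h₂
    exact ⟨h₁, h₂⟩
  have hr0 : 0 < r := hδ.trans_le hr.1
  have hk : (0 : ℝ) ≤ (N - 1 : ℕ) / δ := by positivity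
  have hkr : ((N - 1 : ℕ) : ℝ) / r ≤ (N - 1 : ℕ) / δ :=
    div_le_div_of_nonneg_left (Nat.cast_nonneg _) hδ hr.1
  calc |Fr r (u r) - (N - 1 : ℕ) / r * (v r * phi1 (v r))|
      ≤ |Fr r (u r)| + (N - 1 : ℕ) / r * (v r * phi1 (v r)) := by
        refine (abs_sub _ _).trans_eq ?_
        rw [abs_of_nonneg (mul_nonneg (by positivity) hvphi.1)]
    _ ≤ W * (∫ x in (0 : ℝ)..u r, f r x) + (N - 1 : ℕ) / δ * (2 * kineticEnergy (phi1 (v r))) :=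
        add_le_add (hFr r hr _ hu) (mul_le_mul hkr hvphi.2 hvphi.1 hk)
    _ ≤ (W + 2 * (N - 1 : ℕ) / δ) * energy f u v r := by
        rw [energy]
        linear_combination mul_nonneg hW hkin + 2 * mul_nonneg hk hpot

lemma energy_le (h : IsSolP N δ R 1 f u v) (hδ : 0 < δ)
    (hf : ContinuousOn (Function.uncurry f) (Icc δ R ×ˢ Icc (-R) R))
    (hF : ∀ r ∈ Icc δ R, ∀ s ∈ Icc (-R) R, 0 ≤ ∫ x in (0 : ℝ)..s, f r x)
    {B : ℝ} (hB : ∀ r ∈ Icc δ R, ∀ s ∈ Icc (-R) R, |f r s| ≤ B)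
    (hFr : ∀ r ∈ Icc δ R, ∀ s ∈ Icc (-R) R,
      HasDerivWithinAt (fun t => ∫ x in (0 : ℝ)..s, f t x) (Fr r s) (Icc δ R) r)
    {W : ℝ} (hW : 0 ≤ W)
    (hFr_le : ∀ r ∈ Icc δ R, ∀ s ∈ Icc (-R) R, |Fr r s| ≤ W * ∫ x in (0 : ℝ)..s, f r x)
    {τ : ℝ} (hτ : τ ∈ Icc δ R) (hvτ : v τ = 0) {r : ℝ} (hr : r ∈ Icc δ R) :
    energy f u v r ≤ B * |u τ| * exp ((W + 2 * (N - 1 : ℕ) / δ) * (R - δ)) := by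
  have hgronwall := le_mul_exp_abs_sub_of_abs_deriv_le (h.continuousOn_energy hδ hf hFr)
    (fun x hx => h.hasDerivAt_energy hδ hf hFr hx)
    (fun x hx => h.abs_deriv_energy_le hδ hF hW hFr_le (Ioo_subset_Icc_self hx)) hτ r hr
  have hu := Ioo_subset_Icc_self (h.mem_Ioo hδ hτ)
  have h0 : (0 : ℝ) ∈ Icc (-R) R := ⟨by linarith [hτ.1.trans hτ.2], by linarith [hτ.1.trans hτ.2]⟩
  have hEτ : energy f u v τ ≤ B * |u τ| := by
    have hpot := intervalIntegral.norm_integral_le_of_norm_le_const (f := f τ) (a := 0) (b := u τ)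
      fun x hx => (hB τ hτ x (uIcc_subset_Icc h0 hu (uIoc_subset_uIcc hx)))
    simp only [energy, hvτ, phi1, kineticEnergy]
    simpa using (le_abs_self _).trans hpot
  calc energy f u v r ≤ energy f u v τ * exp ((W + 2 * (N - 1 : ℕ) / δ) * |r - τ|) := hgronwall
    _ ≤ energy f u v τ * exp ((W + 2 * (N - 1 : ℕ) / δ) * (R - δ)) := by
      gcongr
      · exact h.energy_nonneg hδ hF hτ
      · exact abs_sub_le_iff.2 ⟨by linarith [hr.2, hτ.1], by linarith [hr.1, hτ.2]⟩
    _ ≤ B * |u τ| * exp ((W + 2 * (N - 1 : ℕ) / δ) * (R - δ)) := by gcongr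

lemma sq_le_div (h : IsSolP N δ R 1 f u v) (hδ : 0 < δ) (hδR : δ < R)
    (hf : ContinuousOn (Function.uncurry f) (Icc δ R ×ˢ Icc (-R) R))
    (hF : ∀ r ∈ Icc δ R, ∀ s ∈ Icc (-R) R, 0 ≤ ∫ x in (0 : ℝ)..s, f r x)
    {B : ℝ} (hB : ∀ r ∈ Icc δ R, ∀ s ∈ Icc (-R) R, |f r s| ≤ B)
    (hFr : ∀ r ∈ Icc δ R, ∀ s ∈ Icc (-R) R,
      HasDerivWithinAt (fun t => ∫ x in (0 : ℝ)..s, f t x) (Fr r s) (Icc δ R) r)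
    {W : ℝ} (hW : 0 ≤ W)
    (hFr_le : ∀ r ∈ Icc δ R, ∀ s ∈ Icc (-R) R, |Fr r s| ≤ W * ∫ x in (0 : ℝ)..s, f r x)
    {n : ℕ} (hn : 2 ≤ n) {Z : Finset ℝ} (hZcard : Z.card = n - 1)
    (hZ : ∀ r : ℝ, r ∈ Z ↔ r ∈ Ioo δ R ∧ u r = 0) {r : ℝ} (hr : r ∈ Icc δ R) :
    v r ^ 2 ≤ 2 * (B * (R - δ) * exp ((W + 2 * (N - 1 : ℕ) / δ) * (R - δ))) / (n - 1 : ℕ) := by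
  obtain ⟨τ, hτ, hvτ, huτ⟩ := h.exists_deriv_eq_zero_abs_le hδR hn hZcard hZ
  have hB0 : 0 ≤ B := (abs_nonneg _).trans (hB δ ⟨le_rfl, hδR.le⟩ 0 ⟨by linarith, by linarith⟩)
  calc v r ^ 2 ≤ 2 * energy f u v r := h.sq_le_two_mul_energy hδ hF hr
    _ ≤ 2 * (B * ((R - δ) / (n - 1 : ℕ)) * exp ((W + 2 * (N - 1 : ℕ) / δ) * (R - δ))) := by
      gcongr
      exact (h.energy_le hδ hf hF hB hFr hW hFr_le hτ hvτ hr).trans (by gcongr)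
    _ = _ := by ring

end IsSolP

lemma CondA1.continuousOn_uncurry {R δ : ℝ} {α : EReal} {f : ℝ → ℝ → ℝ} (hA1 : CondA1 R α f)
    (hδ : 0 ≤ δ) : ContinuousOn (Function.uncurry f) (Icc δ R ×ˢ Icc (-R) R) :=
  hA1.2.1.mono fun _ hp => ⟨Icc_subset_Icc_left hδ hp.1,
    (EReal.coe_le_coe_iff.2 (abs_le.2 hp.2)).trans_lt hA1.1⟩

lemma CondA1.integral_nonneg {R δ : ℝ} {α : EReal} {f : ℝ → ℝ → ℝ} (hA1 : CondA1 R α f)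
    (hδ : 0 ≤ δ) {r s : ℝ} (hr : r ∈ Icc δ R) (hs : s ∈ Icc (-R) R) :
    0 ≤ ∫ x in (0 : ℝ)..s, f r x := by
  have hsub : uIcc 0 s ⊆ Icc (-R) R :=
    uIcc_subset_Icc ⟨by linarith [hr.1.trans hr.2], by linarith [hr.1.trans hr.2]⟩ hs
  refine integral_nonneg_of_mul_pos (((hA1.continuousOn_uncurry hδ).comp
    (continuousOn_const.prodMk continuousOn_id) fun x hx => ⟨hr, hx⟩).mono hsub).intervalIntegrable
    fun x hx hx0 => hA1.2.2 r (Icc_subset_Icc_left hδ hr) x ?_ hx0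
  exact (EReal.coe_le_coe_iff.2 (abs_le.2 (hsub hx))).trans_lt hA1.1

lemma CondA4.exists_bound {R δ : ℝ} {α : EReal} {f : ℝ → ℝ → ℝ} (hA4 : CondA4 δ R α f)
    (hRα : (R : EReal) < α) (hδR : δ ≤ R)
    (hF : ∀ r ∈ Icc δ R, ∀ s ∈ Icc (-R) R, 0 ≤ ∫ x in (0 : ℝ)..s, f r x) :
    ∃ Fr : ℝ → ℝ → ℝ, ∃ W, 0 ≤ W ∧
      (∀ r ∈ Icc δ R, ∀ s ∈ Icc (-R) R,
        HasDerivWithinAt (fun t => ∫ x in (0 : ℝ)..s, f t x) (Fr r s) (Icc δ R) r) ∧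
      ∀ r ∈ Icc δ R, ∀ s ∈ Icc (-R) R, |Fr r s| ≤ W * ∫ x in (0 : ℝ)..s, f r x := by
  obtain ⟨Fr, ω, hωc, -, hA4⟩ := hA4
  obtain ⟨W, hW⟩ := isCompact_Icc.exists_bound_of_continuousOn hωc
  have hα : ∀ s ∈ Icc (-R) R, ((|s| : ℝ) : EReal) < α := fun s hs =>
    (EReal.coe_le_coe_iff.2 (abs_le.2 hs)).trans_lt hRα
  refine ⟨Fr, W, (norm_nonneg _).trans (hW δ ⟨le_rfl, hδR⟩),
    fun r hr s hs => (hA4 s (hα s hs)).1 r hr, fun r hr s hs => ((hA4 s (hα s hs)).2 r hr).trans ?_⟩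
  exact mul_le_mul_of_nonneg_right ((le_abs_self _).trans (hW r hr)) (hF r hr s hs)

lemma exists_forall_abs_lt_of_abs_le {g : ℕ → ℝ → ℝ} {b : ℕ → ℝ} {S : Set ℝ}
    (hb : Tendsto b atTop (𝓝 0)) (hg : ∀ᶠ n in atTop, ∀ r ∈ S, |g n r| ≤ b n)
    {ε : ℝ} (hε : 0 < ε) : ∃ n₀ : ℕ, ∀ n : ℕ, n₀ ≤ n → ∀ r ∈ S, |g n r| < ε := by
  obtain ⟨n₀, h⟩ := eventually_atTop.1 (hg.and (hb.eventually (gt_mem_nhds hε)))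
  exact ⟨n₀, fun n hn r hr => ((h n hn).1 r hr).trans_lt (h n hn).2⟩

theorem stmt18_general (N : ℕ) (δ R : ℝ) (hδ : 0 < δ) (hδR : δ < R)
    (α : EReal) (f : ℝ → ℝ → ℝ)
    (hA1 : CondA1 R α f) (hA4 : CondA4 δ R α f)
    (u v : ℕ → ℝ → ℝ)
    (hsol : ∀ n : ℕ, 1 ≤ n → IsSolP N δ R 1 f (u n) (v n))
    (hzeros : ∀ n : ℕ, 1 ≤ n → ∃ Z : Finset ℝ, Z.card = n - 1 ∧
      (∀ r : ℝ, r ∈ Z ↔ r ∈ Ioo δ R ∧ u n r = 0) ∧ ∀ r ∈ Z, v n r ≠ 0) :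
    (∀ ε : ℝ, 0 < ε → ∃ n₀ : ℕ, ∀ n : ℕ, n₀ ≤ n → ∀ r ∈ Icc δ R, |u n r| < ε) ∧
    (∀ ε : ℝ, 0 < ε → ∃ n₀ : ℕ, ∀ n : ℕ, n₀ ≤ n → ∀ r ∈ Icc δ R, |v n r| < ε) := by
  have hf := hA1.continuousOn_uncurry hδ.le
  have hF : ∀ r ∈ Icc δ R, ∀ s ∈ Icc (-R) R, 0 ≤ ∫ x in (0 : ℝ)..s, f r x :=
    fun r hr s hs => hA1.integral_nonneg hδ.le hr hs
  obtain ⟨B, hB⟩ := (isCompact_Icc.prod isCompact_Icc).exists_bound_of_continuousOn hf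
  obtain ⟨Fr, W, hW, hFr, hFr_le⟩ := hA4.exists_bound hA1.1 hδR.le hF
  set C := 2 * (B * (R - δ) * exp ((W + 2 * (N - 1 : ℕ) / δ) * (R - δ)))
  have hv : ∀ᶠ n in atTop, ∀ r ∈ Icc δ R, |v n r| ≤ √(C / (n - 1 : ℕ)) := by
    filter_upwards [eventually_ge_atTop 2] with n hn r hr
    obtain ⟨Z, hZcard, hZ, -⟩ := hzeros n (by omega)
    exact Real.abs_le_sqrt ((hsol n (by omega)).sq_le_div hδ hδR hf hF
      (fun r hr s hs => hB (r, s) ⟨hr, hs⟩) hFr hW hFr_le hn hZcard hZ hr)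
  have hlim : Tendsto (fun n : ℕ => √(C / (n - 1 : ℕ))) atTop (𝓝 0) := by
    have hdiv := tendsto_const_nhds (x := C).div_atTop
      (tendsto_natCast_atTop_atTop.comp (tendsto_sub_atTop_nat 1))
    rw [← sqrt_zero]
    exact (continuous_sqrt.tendsto 0).comp hdiv
  refine ⟨fun ε hε => ?_, fun ε hε => exists_forall_abs_lt_of_abs_le hlim hv hε⟩
  refine exists_forall_abs_lt_of_abs_le
    (by simpa only [zero_mul] using hlim.mul_const (R - δ)) ?_ hε
  filter_upwards [hv, eventually_ge_atTop 1] with n hvn hn r hr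
  exact (hsol n hn).abs_le_mul hvn hr

/-- Step in the proof of Corollary 1.2. Under (A1), (A3),
(A4), if for each `n` the function `u n` is a solution of `(P)_{δ,1}` having
exactly `n-1` simple zeros in `(δ,R)`, then both `u n` and its derivative tend
to `0` uniformly on `[δ,R]` as `n → ∞`. -/
theorem stmt18 (N : ℕ) (hN : 2 ≤ N) (δ R : ℝ) (hδ : 0 < δ) (hδR : δ < R)
    (α : EReal) (f : ℝ → ℝ → ℝ)
    (hA1 : CondA1 R α f) (hA3 : CondA3 δ R f) (hA4 : CondA4 δ R α f)
    (u v : ℕ → ℝ → ℝ)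
    (hsol : ∀ n : ℕ, 1 ≤ n → IsSolP N δ R 1 f (u n) (v n))
    (hzeros : ∀ n : ℕ, 1 ≤ n → ∃ Z : Finset ℝ, Z.card = n - 1 ∧
      (∀ r : ℝ, r ∈ Z ↔ r ∈ Ioo δ R ∧ u n r = 0) ∧ ∀ r ∈ Z, v n r ≠ 0) :
    (∀ ε : ℝ, 0 < ε → ∃ n₀ : ℕ, ∀ n : ℕ, n₀ ≤ n → ∀ r ∈ Icc δ R, |u n r| < ε) ∧
    (∀ ε : ℝ, 0 < ε → ∃ n₀ : ℕ, ∀ n : ℕ, n₀ ≤ n → ∀ r ∈ Icc δ R, |v n r| < ε) :=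
  stmt18_general N δ R hδ hδR α f hA1 hA4 u v hsol hzeros
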